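/- arXiv:1603.05095 — 2 statements merged into one kernel-verified Lean document; each statement's English description precedes it below -/
import Mathlib

section
/- In the discrete-time SIS Markov chain, the marginal infection probabilities satisfy p_i(t+1) ≤ (1-δ) p_i(t) + β ∑_{j ∼ i} p_j(t) for every node i and time t. -/
/-!
Given the current state `X`, node `i` is infected one step later with probability `1 - δ` if it
is infected, and `1 - (1 - β) ^ m` otherwise, where `m` is its number of infected neighbours.
Bernoulli's inequality gives `1 - (1 - β) ^ m ≤ m β`, so this conditional probability is at most
`(1 - δ) [X i] + β ∑_{j ∼ i} [X j]`; averaging over `X` against the law at time `t` yields the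
bound, since averaging an indicator `[X j]` gives the marginal `p_j(t)`.
-/

open Finset

/-- One-step transition probability of the discrete-time SIS Markov chain on `G`:
given the current state `X`, each node updates independently; an infected node
recovers with probability `δ`; a susceptible node with `m` infected neighbors
becomes infected with probability `1 - (1-β)^m`. -/
def sisStep {n : ℕ} (G : SimpleGraph (Fin n)) [DecidableRel G.Adj] (β δ : ℝ)
    (X Y : Fin n → Bool) : ℝ :=
  ∏ i : Fin n,
    if X i = true then (if Y i = true then 1 - δ else δ)
    else
      if Y i = true then
        1 - (1 - β) ^ ((G.neighborFinset i).filter fun j => X j = true).card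
      else (1 - β) ^ ((G.neighborFinset i).filter fun j => X j = true).card

/-- Marginal probability of infection of node `i` under distribution `μ`. -/
def marg {n : ℕ} (μ : (Fin n → Bool) → ℝ) (i : Fin n) : ℝ :=
  ∑ X : Fin n → Bool, if X i = true then μ X else 0

/-- Pairwise probability that both `i` and `j` are infected under `μ`. -/
def pPair {n : ℕ} (μ : (Fin n → Bool) → ℝ) (i j : Fin n) : ℝ :=
  ∑ X : Fin n → Bool, if X i = true ∧ X j = true then μ X else 0

/-- Probability that `i` is healthy and `j` is infected under `μ`. -/
def qPair {n : ℕ} (μ : (Fin n → Bool) → ℝ) (i j : Fin n) : ℝ :=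
  ∑ X : Fin n → Bool, if X i = false ∧ X j = true then μ X else 0

theorem Fintype.sum_ite_apply_eq_prod {ι α R : Type*} [Fintype ι] [DecidableEq ι] [Fintype α]
    [DecidableEq α] [CommSemiring R] (g : ι → α → R) (hg : ∀ k, ∑ a, g k a = 1) (i : ι) (a : α) :
    ∑ Y : ι → α, (if Y i = a then ∏ k, g k (Y k) else 0) = g i a := by
  -- zeroing `g i b` for `b ≠ a` makes the restricted sum a full sum of products
  let h : ι → α → R := fun k b => if k = i ∧ b ≠ a then 0 else g k b
  have hY (Y : ι → α) : (if Y i = a then ∏ k, g k (Y k) else 0) = ∏ k, h k (Y k) := by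
    split_ifs with hYi
    · refine Finset.prod_congr rfl fun k _ => (if_neg ?_).symm
      rintro ⟨rfl, hne⟩
      exact hne hYi
    · exact (Finset.prod_eq_zero (f := fun k => h k (Y k)) (mem_univ i) (if_pos ⟨rfl, hYi⟩)).symm
  rw [Finset.sum_congr rfl fun Y _ => hY Y, ← Fintype.prod_sum,
    Finset.prod_eq_single i (fun k _ hk => by simp [h, hk, hg]) (by simp)]
  simp [h]

theorem one_sub_one_sub_pow_le {β : ℝ} (hβ : β ≤ 2) (m : ℕ) : 1 - (1 - β) ^ m ≤ m * β := by
  have := one_add_mul_le_pow (a := -β) (by linarith) m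
  rw [← sub_eq_add_neg] at this
  linarith

section SIS

variable {n : ℕ} (G : SimpleGraph (Fin n)) [DecidableRel G.Adj] (β δ : ℝ)

def sisNodeStep (X : Fin n → Bool) (k : Fin n) (b : Bool) : ℝ :=
  if X k = true then (if b = true then 1 - δ else δ)
  else
    if b = true then 1 - (1 - β) ^ ((G.neighborFinset k).filter fun j => X j = true).card
    else (1 - β) ^ ((G.neighborFinset k).filter fun j => X j = true).card

theorem sisStep_eq_prod (X Y : Fin n → Bool) :
    sisStep G β δ X Y = ∏ k, sisNodeStep G β δ X k (Y k) := rfl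

theorem sum_sisNodeStep (X : Fin n → Bool) (k : Fin n) : ∑ b, sisNodeStep G β δ X k b = 1 := by
  by_cases h : X k = true <;> simp [sisNodeStep, h]

theorem sum_ite_sisStep (X : Fin n → Bool) (i : Fin n) :
    ∑ Y, (if Y i = true then sisStep G β δ X Y else 0) = sisNodeStep G β δ X i true := by
  simp_rw [sisStep_eq_prod]
  exact Fintype.sum_ite_apply_eq_prod _ (sum_sisNodeStep G β δ X) i true

theorem sum_mul_ite_eq_marg (μ : (Fin n → Bool) → ℝ) (i : Fin n) :
    ∑ X, μ X * (if X i = true then 1 else 0) = marg μ i := by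
  simp [marg, mul_ite]

theorem marg_sum_mul_sisStep (μ : (Fin n → Bool) → ℝ) (i : Fin n) :
    marg (fun Y => ∑ X, μ X * sisStep G β δ X Y) i = ∑ X, μ X * sisNodeStep G β δ X i true := by
  simp_rw [marg, ← sum_ite_sisStep, mul_sum, mul_ite, mul_zero]
  rw [sum_comm]
  exact Finset.sum_congr rfl fun Y _ => by split_ifs <;> simp

theorem sisNodeStep_true_le (hβ0 : 0 ≤ β) (hβ2 : β ≤ 2) (X : Fin n → Bool) (i : Fin n) :
    sisNodeStep G β δ X i true ≤
      (1 - δ) * (if X i = true then 1 else 0) +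
        β * ∑ j ∈ G.neighborFinset i, (if X j = true then 1 else 0) := by
  rw [sum_boole]
  by_cases h : X i = true
  · simp only [sisNodeStep, h, if_true, mul_one, le_add_iff_nonneg_right]
    positivity
  · simpa [sisNodeStep, h, mul_comm β] using one_sub_one_sub_pow_le hβ2 _

end SIS

theorem stmt9_general {n : ℕ} (G : SimpleGraph (Fin n)) [DecidableRel G.Adj]
    (β δ : ℝ) (hβ0 : 0 ≤ β) (hβ1 : β ≤ 1)
    (μ : ℕ → (Fin n → Bool) → ℝ)
    (hnn : ∀ t X, 0 ≤ μ t X)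
    (hstep : ∀ t Y, μ (t + 1) Y = ∑ X : Fin n → Bool, μ t X * sisStep G β δ X Y)
    (t : ℕ) (i : Fin n) :
    marg (μ (t + 1)) i ≤
      (1 - δ) * marg (μ t) i + β * ∑ j ∈ G.neighborFinset i, marg (μ t) j := by
  calc marg (μ (t + 1)) i = ∑ X, μ t X * sisNodeStep G β δ X i true := by
        rw [funext (hstep t), marg_sum_mul_sisStep]
    _ ≤ ∑ X, μ t X * ((1 - δ) * (if X i = true then 1 else 0) +
          β * ∑ j ∈ G.neighborFinset i, (if X j = true then 1 else 0)) :=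
        sum_le_sum fun X _ => mul_le_mul_of_nonneg_left
          (sisNodeStep_true_le G β δ hβ0 (by linarith) X i) (hnn t X)
    _ = (1 - δ) * marg (μ t) i + β * ∑ j ∈ G.neighborFinset i, marg (μ t) j := by
        simp only [mul_add, sum_add_distrib, mul_left_comm (μ t _), mul_sum, ← sum_mul_ite_eq_marg]
        rw [sum_comm (s := univ)]

theorem stmt9 {n : ℕ} (G : SimpleGraph (Fin n)) [DecidableRel G.Adj]
    (β δ : ℝ) (hβ0 : 0 ≤ β) (hβ1 : β ≤ 1) (hδ0 : 0 ≤ δ) (hδ1 : δ ≤ 1)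
    (μ : ℕ → (Fin n → Bool) → ℝ)
    (hnn : ∀ t X, 0 ≤ μ t X)
    (hsum : ∀ t, ∑ X : Fin n → Bool, μ t X = 1)
    (hstep : ∀ t Y, μ (t + 1) Y = ∑ X : Fin n → Bool, μ t X * sisStep G β δ X Y)
    (t : ℕ) (i : Fin n) :
    marg (μ (t + 1)) i ≤
      (1 - δ) * marg (μ t) i + β * ∑ j ∈ G.neighborFinset i, marg (μ t) j :=
  stmt9_general G β δ hβ0 hβ1 μ hnn hstep t i
end

section
/- In the discrete-time SIS Markov chain, for every edge (i,j) and time t, the pairwise infection probability p_ij(t) = P(X_i(t)=1, X_j(t)=1) satisfies p_ij(t+1) ≥ (1-δ)β(p_i(t) + p_j(t)) + (1-δ)(1-δ-2β) p_ij(t). -/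
open Finset

section aux

variable {n : ℕ} (G : SimpleGraph (Fin n)) [DecidableRel G.Adj] (β δ : ℝ)

/-- per-node transition factor -/
noncomputable def fnode (X : Fin n → Bool) (k : Fin n) (b : Bool) : ℝ :=
  if X k = true then (if b = true then 1 - δ else δ)
  else
    if b = true then
      1 - (1 - β) ^ ((G.neighborFinset k).filter fun j => X j = true).card
    else (1 - β) ^ ((G.neighborFinset k).filter fun j => X j = true).card

lemma sum_prod_bool {m : ℕ} (g : Fin m → Bool → ℝ) :
    ∑ Y : Fin m → Bool, ∏ k, g k (Y k) = ∏ k, (g k true + g k false) := by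
  rw [← Fintype.prod_sum]
  exact Finset.prod_congr rfl fun k _ => by rw [Fintype.sum_bool]

lemma sisStep_eq (X Y : Fin n → Bool) :
    sisStep G β δ X Y = ∏ k : Fin n, fnode G β δ X k (Y k) := rfl

lemma fnode_sum (X : Fin n → Bool) (k : Fin n) :
    fnode G β δ X k true + fnode G β δ X k false = 1 := by
  unfold fnode; by_cases h : X k = true <;> simp [h]

/-- key factorization: the conditional probability both i,j are infected next step -/
lemma sum_pair (X : Fin n → Bool) (i j : Fin n) (hij : i ≠ j) :
    (∑ Y : Fin n → Bool, if Y i = true ∧ Y j = true then sisStep G β δ X Y else 0)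
      = fnode G β δ X i true * fnode G β δ X j true := by
  have hg : ∀ Y : Fin n → Bool,
      (if Y i = true ∧ Y j = true then sisStep G β δ X Y else 0)
        = ∏ k : Fin n, (if (k = i ∨ k = j) ∧ (Y k = false) then 0
            else fnode G β δ X k (Y k)) := by
    intro Y
    by_cases hi : Y i = true
    · by_cases hj : Y j = true
      · rw [if_pos ⟨hi, hj⟩, sisStep_eq]
        refine Finset.prod_congr rfl fun k _ => ?_
        by_cases hk : Y k = false
        · have : ¬(k = i ∨ k = j) := by
            rintro (rfl | rfl) <;> simp_all
          simp [this, hk]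
        · simp [hk]
      · rw [if_neg (by tauto)]
        refine (Finset.prod_eq_zero (Finset.mem_univ j) ?_).symm
        simp [Bool.not_eq_true] at hj
        simp [hj]
    · rw [if_neg (by tauto)]
      refine (Finset.prod_eq_zero (Finset.mem_univ i) ?_).symm
      simp [Bool.not_eq_true] at hi
      simp [hi]
  calc (∑ Y : Fin n → Bool, if Y i = true ∧ Y j = true then sisStep G β δ X Y else 0)
      = ∑ Y : Fin n → Bool, ∏ k : Fin n, (if (k = i ∨ k = j) ∧ (Y k = false) then 0
            else fnode G β δ X k (Y k)) := Finset.sum_congr rfl fun Y _ => hg Y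
    _ = ∏ k : Fin n, ((if (k = i ∨ k = j) ∧ (true = false) then 0
            else fnode G β δ X k true) + (if (k = i ∨ k = j) ∧ (false = false) then 0
            else fnode G β δ X k false)) := sum_prod_bool
          (fun k b => if (k = i ∨ k = j) ∧ (b = false) then 0 else fnode G β δ X k b)
    _ = ∏ k : Fin n, (if k = i ∨ k = j then fnode G β δ X k true else 1) := by
        refine Finset.prod_congr rfl fun k _ => ?_
        by_cases hk : k = i ∨ k = j
        · simp [hk]
        · simp [hk, fnode_sum G β δ X k]
    _ = ∏ k : Fin n, ((if k = i then fnode G β δ X i true else 1) *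
          (if k = j then fnode G β δ X j true else 1)) := by
        refine Finset.prod_congr rfl fun k _ => ?_
        by_cases h1 : k = i
        · subst h1; simp [hij]
        · by_cases h2 : k = j
          · subst h2; simp [h1]
          · simp [h1, h2]
    _ = fnode G β δ X i true * fnode G β δ X j true := by
        rw [Finset.prod_mul_distrib, Finset.prod_ite_eq' Finset.univ i
          (fun _ => fnode G β δ X i true), Finset.prod_ite_eq' Finset.univ j
          (fun _ => fnode G β δ X j true)]
        simp

end aux

theorem stmt10 {n : ℕ} (G : SimpleGraph (Fin n)) [DecidableRel G.Adj]
    (β δ : ℝ) (hβ0 : 0 ≤ β) (hβ1 : β ≤ 1) (hδ0 : 0 ≤ δ) (hδ1 : δ ≤ 1)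
    (μ : ℕ → (Fin n → Bool) → ℝ)
    (hnn : ∀ t X, 0 ≤ μ t X)
    (hsum : ∀ t, ∑ X : Fin n → Bool, μ t X = 1)
    (hstep : ∀ t Y, μ (t + 1) Y = ∑ X : Fin n → Bool, μ t X * sisStep G β δ X Y)
    (t : ℕ) (i j : Fin n) (hij : G.Adj i j) :
    (1 - δ) * β * (marg (μ t) i + marg (μ t) j) +
        (1 - δ) * (1 - δ - 2 * β) * pPair (μ t) i j ≤ pPair (μ (t + 1)) i j := by
  have hne : i ≠ j := hij.ne
  have hβ' : 0 ≤ 1 - β := by linarith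
  have hδ' : 0 ≤ 1 - δ := by linarith
  -- rewrite pPair (μ (t+1)) as a sum over X
  have hstep' : pPair (μ (t + 1)) i j
      = ∑ X : Fin n → Bool, μ t X * (fnode G β δ X i true * fnode G β δ X j true) := by
    unfold pPair
    calc (∑ Y : Fin n → Bool, if Y i = true ∧ Y j = true then μ (t+1) Y else 0)
        = ∑ Y : Fin n → Bool, ∑ X : Fin n → Bool,
            (if Y i = true ∧ Y j = true then μ t X * sisStep G β δ X Y else 0) := by
          refine Finset.sum_congr rfl fun Y _ => ?_
          rw [hstep t Y]
          by_cases h : Y i = true ∧ Y j = true <;> simp [h]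
      _ = ∑ X : Fin n → Bool, ∑ Y : Fin n → Bool,
            (if Y i = true ∧ Y j = true then μ t X * sisStep G β δ X Y else 0) :=
          Finset.sum_comm
      _ = ∑ X : Fin n → Bool, μ t X * (fnode G β δ X i true * fnode G β δ X j true) := by
          refine Finset.sum_congr rfl fun X _ => ?_
          rw [← sum_pair G β δ X i j hne, Finset.mul_sum]
          refine Finset.sum_congr rfl fun Y _ => ?_
          by_cases h : Y i = true ∧ Y j = true <;> simp [h]
  rw [hstep', marg, marg, pPair, mul_add, Finset.mul_sum, Finset.mul_sum, Finset.mul_sum,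
    ← Finset.sum_add_distrib, ← Finset.sum_add_distrib]
  refine Finset.sum_le_sum fun X _ => ?_
  have hμ := hnn t X
  -- bounds on the healthy-node factors
  have hb : ∀ k : Fin n, X k = false →
      0 ≤ fnode G β δ X k true ∧ fnode G β δ X k true ≤ 1 := by
    intro k hk
    have h1 : (0:ℝ) ≤ (1 - β) ^ (((G.neighborFinset k).filter fun l => X l = true).card) :=
      pow_nonneg hβ' _
    have h2 : (1 - β) ^ (((G.neighborFinset k).filter fun l => X l = true).card) ≤ 1 :=
      pow_le_one₀ hβ' (by linarith)
    unfold fnode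
    simp only [hk]
    constructor <;> simp <;> linarith
  have hinf : ∀ k l : Fin n, X k = false → G.Adj k l → X l = true →
      β ≤ fnode G β δ X k true := by
    intro k l hk hadj hl
    have hm : 1 ≤ (((G.neighborFinset k).filter fun m => X m = true).card) := by
      refine Finset.card_pos.mpr ⟨l, ?_⟩
      simp [SimpleGraph.mem_neighborFinset, hadj, hl]
    have : (1 - β) ^ (((G.neighborFinset k).filter fun m => X m = true).card) ≤ 1 - β := by
      calc (1 - β) ^ (((G.neighborFinset k).filter fun m => X m = true).card)
          ≤ (1 - β) ^ 1 := pow_le_pow_of_le_one hβ' (by linarith) hm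
        _ = 1 - β := pow_one _
    unfold fnode
    simp only [hk]
    simp
    linarith
  by_cases hXi : X i = true <;> by_cases hXj : X j = true
  · have hfi : fnode G β δ X i true = 1 - δ := by unfold fnode; simp [hXi]
    have hfj : fnode G β δ X j true = 1 - δ := by unfold fnode; simp [hXj]
    rw [hfi, hfj]
    simp [hXi, hXj]
    nlinarith
  · have hfi : fnode G β δ X i true = 1 - δ := by unfold fnode; simp [hXi]
    have hXj' : X j = false := by simp [Bool.not_eq_true] at hXj; exact hXj
    have hfj := hinf j i hXj' hij.symm hXi
    have hfj1 := (hb j hXj').2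
    rw [hfi]
    simp [hXi, hXj]
    nlinarith [mul_le_mul_of_nonneg_left hfj (mul_nonneg hμ hδ')]
  · have hfj : fnode G β δ X j true = 1 - δ := by unfold fnode; simp [hXj]
    have hXi' : X i = false := by simp [Bool.not_eq_true] at hXi; exact hXi
    have hfi := hinf i j hXi' hij hXj
    have hfi1 := (hb i hXi').2
    rw [hfj]
    simp [hXi, hXj]
    nlinarith [mul_le_mul_of_nonneg_left hfi (mul_nonneg hμ hδ')]
  · have hXi' : X i = false := by simp [Bool.not_eq_true] at hXi; exact hXi
    have hXj' : X j = false := by simp [Bool.not_eq_true] at hXj; exact hXj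
    have hfi := (hb i hXi').1
    have hfj := (hb j hXj').1
    simp [hXi, hXj]
    positivity
end
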